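/- If the layered (residual) network derived from BFS contains no directed path from source s to sink t, then every path from s to t in the residual network has length strictly greater than ℓ(t), where ℓ is the BFS distance—in particular, if t is unreachable in the residual network, the current flow admits no augmenting path. -/
import Mathlib


/-- `HasPath A n u v`: there is a directed path with exactly `n` edges from `u` to `v`. -/
def HasPath {V : Type*} (A : V → V → Prop) : ℕ → V → V → Prop
  | 0, u, v => u = v
  | n + 1, u, v => ∃ w, A u w ∧ HasPath A n w v

/-- BFS distance from `s` in the residual network. -/
noncomputable def bfsDist {V : Type*} (A : V → V → Prop) (s v : V) : ℕ :=
  sInf {n | HasPath A n s v}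

lemma HasPath.snoc {V : Type*} {A : V → V → Prop} :
    ∀ {n : ℕ} {u v w : V}, HasPath A n u v → A v w → HasPath A (n + 1) u w := by
  intro n
  induction n with
  | zero => intro u v w h e; cases h; exact ⟨w, e, rfl⟩
  | succ n ih =>
    rintro u v w ⟨x, e1, hp⟩ e
    exact ⟨x, e1, ih hp e⟩

lemma hasPath_succ_iff_snoc {V : Type*} {A : V → V → Prop} :
    ∀ {n : ℕ} {u v : V}, HasPath A (n + 1) u v ↔ ∃ w, HasPath A n u w ∧ A w v := by
  intro n
  induction n with
  | zero =>
    intro u v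
    constructor
    · rintro ⟨w, e, h⟩; cases h; exact ⟨u, rfl, e⟩
    · rintro ⟨w, h, e⟩; cases h; exact ⟨v, e, rfl⟩
  | succ n ih =>
    intro u v
    constructor
    · rintro ⟨w, e, h⟩
      obtain ⟨x, hx, ex⟩ := ih.mp h
      exact ⟨x, ⟨w, e, hx⟩, ex⟩
    · rintro ⟨w, h, e⟩
      obtain ⟨x, e1, hx⟩ := h
      exact ⟨x, e1, ih.mpr ⟨w, hx, e⟩⟩

lemma HasPath.mono {V : Type*} {A B : V → V → Prop} (hAB : ∀ u v, A u v → B u v) :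
    ∀ {n : ℕ} {u v : V}, HasPath A n u v → HasPath B n u v := by
  intro n
  induction n with
  | zero => intro u v h; exact h
  | succ n ih => rintro u v ⟨w, e, h⟩; exact ⟨w, hAB _ _ e, ih h⟩

lemma bfsDist_le {V : Type*} {A : V → V → Prop} {s v : V} {n : ℕ}
    (h : HasPath A n s v) : bfsDist A s v ≤ n :=
  Nat.sInf_le h

lemma bfsDist_self {V : Type*} (A : V → V → Prop) (s : V) : bfsDist A s s = 0 :=
  Nat.le_zero.mp (Nat.sInf_le (show HasPath A 0 s s from rfl))

/-- A shortest path is a layered path. -/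
lemma shortest_is_layered {V : Type*} {A : V → V → Prop} {s : V} :
    ∀ {n : ℕ} {v : V}, HasPath A n s v → n = bfsDist A s v →
      HasPath (fun u v => A u v ∧ bfsDist A s v = bfsDist A s u + 1) n s v := by
  intro n
  induction n with
  | zero => intro v h _; exact h
  | succ n ih =>
    intro v h hd
    obtain ⟨w, hw, e⟩ := hasPath_succ_iff_snoc.mp h
    have hle : bfsDist A s w ≤ n := bfsDist_le hw
    -- there is a path of length bfsDist A s w from s to w
    have hmem : HasPath A (bfsDist A s w) s w :=
      Nat.sInf_mem (s := {k | HasPath A k s w}) ⟨n, hw⟩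
    have hv : bfsDist A s v ≤ bfsDist A s w + 1 := bfsDist_le (hmem.snoc e)
    have hge : n ≤ bfsDist A s w := by omega
    have heq : bfsDist A s w = n := le_antisymm hle hge
    have hlay := ih hw heq.symm
    exact hlay.snoc ⟨e, by omega⟩

lemma layered_dist {V : Type*} {A : V → V → Prop} {s : V} :
    ∀ {n : ℕ} {u v : V},
      HasPath (fun u v => A u v ∧ bfsDist A s v = bfsDist A s u + 1) n u v →
      bfsDist A s v = bfsDist A s u + n := by
  intro n
  induction n with
  | zero => intro u v h; cases h; simp
  | succ n ih =>
    rintro u v ⟨w, ⟨_, hw⟩, h⟩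
    have := ih h
    omega

/-- Let `A` be the residual network and `A'` its layered network, keeping only edges
`(u, v)` with `ℓ(v) = ℓ(u) + 1` for the BFS distance `ℓ` from `s`. Then `t` is reachable
from `s` in the layered network iff it is reachable in the residual network (so if the
layered network has no `s`-`t` path, there is no augmenting path), and every `s`-`t` path
in the layered network is a shortest `s`-`t` path in the residual network. -/
theorem layered_network_reachability {V : Type*} (A : V → V → Prop) (s t : V) :
    ((∃ n, HasPath (fun u v => A u v ∧ bfsDist A s v = bfsDist A s u + 1) n s t) ↔
      ∃ n, HasPath A n s t) ∧
    (∀ n, HasPath (fun u v => A u v ∧ bfsDist A s v = bfsDist A s u + 1) n s t →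
      ∀ m, HasPath A m s t → n ≤ m) := by
  constructor
  · constructor
    · rintro ⟨n, h⟩
      exact ⟨n, h.mono (fun u v hv => hv.1)⟩
    · rintro ⟨n, h⟩
      have hmem : HasPath A (bfsDist A s t) s t :=
        Nat.sInf_mem (s := {k | HasPath A k s t}) ⟨n, h⟩
      exact ⟨bfsDist A s t, shortest_is_layered hmem rfl⟩
  · intro n hn m hm
    have h1 := layered_dist hn
    have h2 := bfsDist_le hm
    have h3 := bfsDist_self A s
    omega
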